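/- arXiv:1507.04978 — 3 statements merged into one kernel-verified Lean document; each statement's English description precedes it below -/
import Mathlib

section
/- Let U be a zero-mean real random variable with variance s > 0 and m.g.f. finite near 0, and let I_L(d) = sup_{θ≥0}(θd − log E[e^{−θU}]) denote the left rate function. Then lim_{d→0⁺} I_L(d)/d² = 1/(2s), i.e., the left and right rate functions have the same quadratic behavior near 0. -/
open MeasureTheory ProbabilityTheory Real Set Filter

open scoped Topology

/-!
Write `Λ = cgf X μ`. Since `Λ 0 = Λ' 0 = 0` and `Λ'' 0 = s`, Taylor's theorem gives
`Λ θ ~ s θ² / 2` as `θ → 0⁺`; the choice `θ = d / s` then shows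
`I(d) ≥ d² / (2 s) (1 + o(1))`. Conversely, if `Λ θ ≥ c θ²` on `(0, θ₁]` for some `c < s / 2`,
then `θ d - Λ θ ≤ d² / (4 c)` there, while for `θ > θ₁` the monotonicity of `Λ θ / θ`
(Jensen for `x ↦ x ^ (b / a)`) makes `θ d - Λ θ ≤ 0` as soon as `d ≤ c θ₁`.
The left rate function of `U` is the right one of `-U`.
-/

namespace ProbabilityTheory

variable {Ω : Type*} [MeasurableSpace Ω] {μ : Measure Ω} {X : Ω → ℝ}

/-- The right Cramér rate function. The supremum is restricted to `integrableExpSet X μ` because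
`cgf X μ θ` takes the junk value `0` outside it. -/
noncomputable def rateFunction (X : Ω → ℝ) (μ : Measure Ω) (d : ℝ) : ℝ :=
  sSup ((fun θ => θ * d - cgf X μ θ) '' (Ici 0 ∩ integrableExpSet X μ))

lemma iteratedDeriv_two_cgf_zero [IsProbabilityMeasure μ]
    (h0 : 0 ∈ interior (integrableExpSet X μ)) (hc : μ[X] = 0) :
    iteratedDeriv 2 (cgf X μ) 0 = μ[fun ω => X ω ^ 2] := by
  simp [iteratedDeriv_two_cgf h0, deriv_cgf_zero h0, hc]

lemma continuousAt_iteratedDeriv_cgf (n : ℕ) {t : ℝ}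
    (ht : t ∈ interior (integrableExpSet X μ)) :
    ContinuousAt (iteratedDeriv n (cgf X μ)) t := by
  rw [iteratedDeriv_eq_iterate]
  exact (analyticOnNhd_cgf.iterated_deriv n t ht).continuousAt

theorem tendsto_cgf_div_sq [IsProbabilityMeasure μ]
    (h0 : 0 ∈ interior (integrableExpSet X μ)) (hc : μ[X] = 0) :
    Tendsto (fun t => cgf X μ t / t ^ 2) (𝓝[>] 0) (𝓝 (μ[fun ω => X ω ^ 2] / 2)) := by
  obtain ⟨r, hr, hball⟩ := Metric.isOpen_iff.1 isOpen_interior 0 h0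
  have hmvt : ∀ t ∈ Ioo 0 r, ∃ u ∈ Ioo 0 t,
      cgf X μ t = iteratedDeriv 2 (cgf X μ) u * t ^ 2 / 2 := fun t ht =>
    exists_cgf_eq_iteratedDeriv_two_cgf_mul ht.1 hc fun u hu =>
      hball (by rw [Real.ball_eq_Ioo]; exact ⟨by linarith [hu.1], by linarith [hu.2, ht.2]⟩)
  choose! u hu hcgf using hmvt
  have hsmall : ∀ᶠ t in 𝓝[>] (0 : ℝ), t ∈ Ioo 0 r := Ioo_mem_nhdsGT hr
  have hu0 : Tendsto u (𝓝[>] 0) (𝓝 0) := by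
    refine tendsto_of_tendsto_of_tendsto_of_le_of_le' tendsto_const_nhds
      (tendsto_nhdsWithin_of_tendsto_nhds tendsto_id) ?_ ?_ <;>
    filter_upwards [hsmall] with t ht
    exacts [(hu t ht).1.le, (hu t ht).2.le]
  have hlim := ((continuousAt_iteratedDeriv_cgf 2 h0).tendsto.comp hu0).div_const 2
  rw [iteratedDeriv_two_cgf_zero h0 hc] at hlim
  refine hlim.congr' ?_
  filter_upwards [hsmall] with t ht
  rw [Function.comp_apply, hcgf t ht]
  field_simp [ht.1.ne']

theorem cgf_div_le_cgf_div [IsProbabilityMeasure μ] {a b : ℝ} (ha : 0 < a) (hab : a ≤ b)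
    (hb : b ∈ integrableExpSet X μ) :
    cgf X μ a / a ≤ cgf X μ b / b := by
  have hb0 : 0 < b := ha.trans_le hab
  have hia : Integrable (fun ω => exp (a * X ω)) μ :=
    integrable_exp_mul_of_nonneg_of_le hb ha.le hab
  have hp : 1 ≤ b / a := (one_le_div ha).2 hab
  have hpow : ∀ ω, exp (a * X ω) ^ (b / a) = exp (b * X ω) := fun ω => by
    rw [← exp_mul]; congr 1; field_simp
  have hjensen : mgf X μ a ^ (b / a) ≤ mgf X μ b := by
    have := (convexOn_rpow hp).map_integral_le
      (continuousOn_id.rpow_const fun _ _ => Or.inr (zero_le_one.trans hp)) isClosed_Ici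
      (ae_of_all _ fun ω => (exp_pos (a * X ω)).le) hia
      (by simp only [Function.comp_def, hpow]; exact hb)
    simpa [mgf, hpow] using this
  have hlog : b / a * cgf X μ a ≤ cgf X μ b := by
    rw [cgf, cgf, ← log_rpow (mgf_pos hia)]
    exact log_le_log (by positivity [mgf_pos hia]) hjensen
  calc cgf X μ a / a = b / a * cgf X μ a / b := by field_simp
    _ ≤ cgf X μ b / b := by gcongr

theorem sq_div_mem_upperBounds_of_le_cgf [IsProbabilityMeasure μ] {c θ₁ d : ℝ}
    (hc : 0 < c) (hθ₁ : 0 < θ₁) (hquad : ∀ θ ∈ Ioc 0 θ₁, c * θ ^ 2 ≤ cgf X μ θ) (hd : d ≤ c * θ₁) :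
    d ^ 2 / (4 * c) ∈
      upperBounds ((fun θ => θ * d - cgf X μ θ) '' (Ici 0 ∩ integrableExpSet X μ)) := by
  rintro _ ⟨θ, ⟨hθ, hθX⟩, rfl⟩
  have hbound : 0 ≤ d ^ 2 / (4 * c) := by positivity
  rcases (mem_Ici.1 hθ).eq_or_lt with rfl | hθpos
  · simpa using hbound
  rcases le_or_gt θ θ₁ with hle | hgt
  · have := hquad θ ⟨hθpos, hle⟩
    rw [le_div_iff₀ (by positivity)]
    nlinarith [sq_nonneg (d - 2 * c * θ)]
  · have hslope : c * θ₁ ≤ cgf X μ θ / θ := calc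
      c * θ₁ = c * θ₁ ^ 2 / θ₁ := by field_simp
      _ ≤ cgf X μ θ₁ / θ₁ := by gcongr; exact hquad θ₁ ⟨hθ₁, le_rfl⟩
      _ ≤ cgf X μ θ / θ := cgf_div_le_cgf_div hθ₁ hgt.le hθX
    rw [le_div_iff₀ hθpos] at hslope
    nlinarith

theorem eventually_sq_div_mem_upperBounds [IsProbabilityMeasure μ]
    (h0 : 0 ∈ interior (integrableExpSet X μ)) (hX : μ[X] = 0) {c : ℝ} (hc : 0 < c)
    (hcs : c < μ[fun ω => X ω ^ 2] / 2) :
    ∀ᶠ d in 𝓝[>] 0,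
      d ^ 2 / (4 * c) ∈
        upperBounds ((fun θ => θ * d - cgf X μ θ) '' (Ici 0 ∩ integrableExpSet X μ)) := by
  obtain ⟨r, hr : 0 < r, hsub⟩ := mem_nhdsGT_iff_exists_Ioo_subset.1
    ((tendsto_cgf_div_sq h0 hX).eventually_const_lt hcs)
  have hquad : ∀ θ ∈ Ioc 0 (r / 2), c * θ ^ 2 ≤ cgf X μ θ := fun θ hθ => by
    have : c < cgf X μ θ / θ ^ 2 := hsub ⟨hθ.1, by linarith [hθ.2]⟩
    exact (lt_div_iff₀ (pow_pos hθ.1 2)).1 this |>.le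
  filter_upwards [nhdsWithin_le_nhds (Iio_mem_nhds (by positivity : (0 : ℝ) < c * (r / 2)))]
    with d hd
  exact sq_div_mem_upperBounds_of_le_cgf hc (by positivity) hquad (le_of_lt hd)

theorem eventually_lt_rateFunction_div_sq [IsProbabilityMeasure μ]
    (h0 : 0 ∈ interior (integrableExpSet X μ)) (hX : μ[X] = 0)
    (hs : 0 < μ[fun ω => X ω ^ 2]) {a : ℝ} (ha : a < 1 / (2 * μ[fun ω => X ω ^ 2])) :
    ∀ᶠ d in 𝓝[>] 0, a < rateFunction X μ d / d ^ 2 := by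
  set s := μ[fun ω => X ω ^ 2]
  have hscale : Tendsto (fun d => d / s) (𝓝[>] 0) (𝓝[>] 0) :=
    tendsto_nhdsWithin_of_tendsto_nhds_of_eventually_within _
      (((continuous_id.div_const s).tendsto' 0 0 (zero_div s)).mono_left
        nhdsWithin_le_nhds)
      (eventually_nhdsWithin_of_forall fun d hd => div_pos hd hs)
  have hlower : Tendsto (fun d => (d / s * d - cgf X μ (d / s)) / d ^ 2) (𝓝[>] 0)
      (𝓝 (1 / (2 * s))) := by
    have := (tendsto_const_nhds (x := 1 / s)).sub
      (((tendsto_cgf_div_sq h0 hX).comp hscale).div_const (s ^ 2))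
    rw [show 1 / s - s / 2 / s ^ 2 = 1 / (2 * s) by field_simp; ring] at this
    refine this.congr' ?_
    filter_upwards [self_mem_nhdsWithin] with d (hd : 0 < d)
    simp only [Function.comp_apply]
    field_simp
  have hmem : ∀ᶠ θ in 𝓝[>] (0 : ℝ), θ ∈ integrableExpSet X μ :=
    nhdsWithin_le_nhds (mem_interior_iff_mem_nhds.1 h0)
  filter_upwards [hlower.eventually_const_lt ha, hscale.eventually hmem,
    eventually_sq_div_mem_upperBounds h0 hX (c := s / 4) (by positivity) (by linarith),
    self_mem_nhdsWithin] with d hlt hd hbdd (hd0 : 0 < d)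
  refine hlt.trans_le (div_le_div_of_nonneg_right ?_ (by positivity))
  exact le_csSup ⟨_, hbdd⟩ ⟨d / s, ⟨div_nonneg hd0.le hs.le, hd⟩, rfl⟩

theorem eventually_rateFunction_div_sq_lt [IsProbabilityMeasure μ]
    (h0 : 0 ∈ interior (integrableExpSet X μ)) (hX : μ[X] = 0)
    (hs : 0 < μ[fun ω => X ω ^ 2]) {b : ℝ} (hb : 1 / (2 * μ[fun ω => X ω ^ 2]) < b) :
    ∀ᶠ d in 𝓝[>] 0, rateFunction X μ d / d ^ 2 < b := by
  set s := μ[fun ω => X ω ^ 2] with hs_def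
  have hb0 : 0 < b := lt_trans (by positivity) hb
  have hbs : 1 / b < 2 * s := (one_div_lt (by positivity) hb0).1 hb
  set c := (1 / b + 2 * s) / 8 with hc_def
  have hc : 1 / (4 * c) < b := (one_div_lt (by positivity) hb0).2 (by rw [hc_def]; linarith)
  filter_upwards [eventually_sq_div_mem_upperBounds h0 hX (c := c) (by positivity)
    (by rw [← hs_def, hc_def]; linarith), self_mem_nhdsWithin] with d hd (hd0 : 0 < d)
  calc rateFunction X μ d / d ^ 2 ≤ d ^ 2 / (4 * c) / d ^ 2 := by
        gcongr
        exact csSup_le ⟨_, 0, ⟨mem_Ici.2 le_rfl, interior_subset h0⟩, rfl⟩ hd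
    _ = 1 / (4 * c) := by field_simp
    _ < b := hc

theorem tendsto_rateFunction_div_sq [IsProbabilityMeasure μ]
    (h0 : 0 ∈ interior (integrableExpSet X μ)) (hX : μ[X] = 0)
    (hs : 0 < μ[fun ω => X ω ^ 2]) :
    Tendsto (fun d => rateFunction X μ d / d ^ 2) (𝓝[>] 0)
      (𝓝 (1 / (2 * μ[fun ω => X ω ^ 2]))) :=
  tendsto_order.2 ⟨fun _ ha => eventually_lt_rateFunction_div_sq h0 hX hs ha,
    fun _ hb => eventually_rateFunction_div_sq_lt h0 hX hs hb⟩

lemma mem_integrableExpSet_neg {θ : ℝ} :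
    θ ∈ integrableExpSet (-X) μ ↔ Integrable (fun ω => exp (-θ * X ω)) μ := by
  simp only [integrableExpSet, mem_ofPred_eq, Pi.neg_apply, mul_neg, neg_mul]

lemma rateFunction_neg (d : ℝ) :
    rateFunction (-X) μ d = sSup {x : ℝ | ∃ θ : ℝ, 0 ≤ θ ∧
      Integrable (fun ω => exp (-θ * X ω)) μ ∧ x = θ * d - log (∫ ω, exp (-θ * X ω) ∂μ)} := by
  simp only [rateFunction, cgf, mgf, Pi.neg_apply, mul_neg, ← neg_mul]
  congr 1
  ext x
  simp only [mem_image, mem_inter_iff, mem_Ici, mem_integrableExpSet_neg, mem_ofPred_eq]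
  constructor
  · rintro ⟨θ, ⟨hθ, hint⟩, rfl⟩
    exact ⟨θ, hθ, hint, rfl⟩
  · rintro ⟨θ, hθ, hint, rfl⟩
    exact ⟨θ, ⟨hθ, hint⟩, rfl⟩

end ProbabilityTheory

theorem stmt4_general
    {Ω : Type*} [MeasurableSpace Ω] (μ : Measure Ω) [IsProbabilityMeasure μ]
    (U : Ω → ℝ)
    (hmean : ∫ ω, U ω ∂μ = 0)
    (s : ℝ) (hs : ∫ ω, (U ω) ^ 2 ∂μ = s) (hs0 : 0 < s)
    (ε : ℝ) (hε : 0 < ε)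
    (hfin : ∀ θ : ℝ, |θ| < ε → Integrable (fun ω => Real.exp (θ * U ω)) μ)
    (IL : ℝ → ℝ)
    (hIL : ∀ d : ℝ, IL d = sSup {x : ℝ | ∃ θ : ℝ, 0 ≤ θ ∧
      Integrable (fun ω => Real.exp (-θ * U ω)) μ ∧
      x = θ * d - Real.log (∫ ω, Real.exp (-θ * U ω) ∂μ)}) :
    Tendsto (fun d : ℝ => IL d / d ^ 2) (nhdsWithin 0 (Set.Ioi 0))
      (nhds (1 / (2 * s))) := by
  have h0 : 0 ∈ interior (integrableExpSet (-U) μ) := by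
    refine mem_interior.2 ⟨Ioo (-ε) ε, fun θ hθ => ?_, isOpen_Ioo, by simp [hε]⟩
    exact mem_integrableExpSet_neg.2 (hfin (-θ) (by simpa [abs_lt, and_comm] using hθ))
  have hmean' : μ[-U] = 0 := by simp [integral_neg, hmean]
  have hs' : μ[fun ω => (-U) ω ^ 2] = s := by simpa using hs
  have hIL' : IL = rateFunction (-U) μ := funext fun d => (hIL d).trans (rateFunction_neg d).symm
  have := tendsto_rateFunction_div_sq h0 hmean' (hs'.symm ▸ hs0)
  rwa [hs', ← hIL'] at this

/-- For a zero-mean real random variable `U` with variance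
`s = E[U²] > 0` and m.g.f. finite near `0`, the left rate function
`I_L(d) = sup_{θ ≥ 0} (θ d - log E[exp (-θ U)])` (supremum over those `θ ≥ 0`
where the m.g.f. of `-U` is finite) satisfies
`lim_{d → 0⁺} I_L(d) / d² = 1 / (2 s)`, the same quadratic behavior near `0`
as the right rate function. -/
theorem stmt4
    {Ω : Type*} [MeasurableSpace Ω] (μ : Measure Ω) [IsProbabilityMeasure μ]
    (U : Ω → ℝ) (hUmeas : Measurable U) (hUint : Integrable U μ)
    (hmean : ∫ ω, U ω ∂μ = 0)
    (s : ℝ) (hs : ∫ ω, (U ω) ^ 2 ∂μ = s) (hs0 : 0 < s)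
    (hsqint : Integrable (fun ω => (U ω) ^ 2) μ)
    (ε : ℝ) (hε : 0 < ε)
    (hfin : ∀ θ : ℝ, |θ| < ε → Integrable (fun ω => Real.exp (θ * U ω)) μ)
    (hC2 : ContDiffOn ℝ 2 (fun θ => mgf U μ θ) (Set.Ioo (-ε) ε))
    (IL : ℝ → ℝ)
    (hIL : ∀ d : ℝ, IL d = sSup {x : ℝ | ∃ θ : ℝ, 0 ≤ θ ∧
      Integrable (fun ω => Real.exp (-θ * U ω)) μ ∧
      x = θ * d - Real.log (∫ ω, Real.exp (-θ * U ω) ∂μ)}) :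
    Tendsto (fun d : ℝ => IL d / d ^ 2) (nhdsWithin 0 (Set.Ioi 0))
      (nhds (1 / (2 * s))) :=
  stmt4_general μ U hmean s hs hs0 ε hε hfin IL hIL
end

section
/- Fix σ > 0 and α₁ ∈ (0, 1], and define s(p) = α₁ p² + 2σ² p + σ⁴ for p ≥ 0. For any t > 0 with √(2t)·√α₁ < 1, and any p₀ ≥ 0, there exists p > p₀ satisfying (p − p₀)² = 2t (√s(p) + √s(p₀))², and the smallest such p satisfies p − p₀ ≥ √(2t)·(√s(p₀) + σ²)/(1 − √(2t α₁)); in particular p > p₀. -/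
open Real Set
set_option maxHeartbeats 800000

/-- Fix `σ > 0`, `α₁ ∈ (0,1]`, and `s(p) = α₁ p² + 2σ² p + σ⁴`.
For any `t > 0` with `√(2t) √α₁ < 1` and any `p₀ ≥ 0`, there exists `p > p₀`
with `(p - p₀)² = 2t (√s(p) + √s(p₀))²`, and the smallest such `p` satisfies
`p - p₀ ≥ √(2t) (√s(p₀) + σ²) / (1 - √(2 t α₁))`. -/
theorem stmt12
    (σ α₁ t p₀ : ℝ) (hσ : 0 < σ) (hα₁ : 0 < α₁) (hα₁' : α₁ ≤ 1)
    (ht : 0 < t) (ht' : Real.sqrt (2 * t) * Real.sqrt α₁ < 1) (hp₀ : 0 ≤ p₀)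
    (s : ℝ → ℝ) (hs : ∀ p, s p = α₁ * p ^ 2 + 2 * σ ^ 2 * p + σ ^ 4) :
    (∃ p : ℝ, p₀ < p ∧
      (p - p₀) ^ 2 = 2 * t * (Real.sqrt (s p) + Real.sqrt (s p₀)) ^ 2) ∧
    (∃ p : ℝ, IsLeast {q : ℝ | p₀ < q ∧
        (q - p₀) ^ 2 = 2 * t * (Real.sqrt (s q) + Real.sqrt (s p₀)) ^ 2} p ∧
      Real.sqrt (2 * t) * (Real.sqrt (s p₀) + σ ^ 2)
        / (1 - Real.sqrt (2 * t * α₁)) ≤ p - p₀) := by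
  have h2t : (0:ℝ) ≤ 2 * t := by linarith
  set c := Real.sqrt (2 * t) with hc
  have hc0 : 0 < c := Real.sqrt_pos.mpr (by linarith)
  have hc2 : c ^ 2 = 2 * t := Real.sq_sqrt h2t
  have hra : 0 ≤ Real.sqrt α₁ := Real.sqrt_nonneg _
  have hra2 : Real.sqrt α₁ ^ 2 = α₁ := Real.sq_sqrt hα₁.le
  have hra1 : Real.sqrt α₁ ≤ 1 := by
    rw [show (1:ℝ) = Real.sqrt 1 by simp]
    exact Real.sqrt_le_sqrt hα₁'
  have hk : 0 < 1 - c * Real.sqrt α₁ := by linarith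
  set A := Real.sqrt (s p₀) with hA
  have hA0 : σ ^ 2 ≤ A := by
    rw [hA, hs]
    calc σ ^ 2 = Real.sqrt ((σ ^ 2) ^ 2) := (Real.sqrt_sq (by positivity)).symm
      _ ≤ _ := Real.sqrt_le_sqrt (by nlinarith)
  have hApos : 0 < A := lt_of_lt_of_le (by positivity) hA0
  -- lower bound on sqrt (s q) for q ≥ 0
  have hlow : ∀ q : ℝ, 0 ≤ q → Real.sqrt α₁ * q + σ ^ 2 ≤ Real.sqrt (s q) := by
    intro q hq
    have h1 : (Real.sqrt α₁ * q + σ ^ 2) ^ 2 ≤ s q := by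
      rw [hs]; nlinarith [sq_nonneg σ, mul_nonneg (mul_nonneg hq (sq_nonneg σ)) (sub_nonneg.mpr hra1)]
    calc Real.sqrt α₁ * q + σ ^ 2
        = Real.sqrt ((Real.sqrt α₁ * q + σ ^ 2) ^ 2) := (Real.sqrt_sq (by positivity)).symm
      _ ≤ Real.sqrt (s q) := Real.sqrt_le_sqrt h1
  -- the function g
  set g : ℝ → ℝ := fun q => q - p₀ - c * (Real.sqrt (s q) + A) with hg
  have hgc : Continuous g := by
    have hsc : Continuous s := by
      have : s = fun p => α₁ * p ^ 2 + 2 * σ ^ 2 * p + σ ^ 4 := funext hs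
      rw [this]; continuity
    rw [hg]; continuity
  -- root of g gives membership in the set and conversely
  have key : ∀ q : ℝ, g q = 0 ↔ (p₀ < q ∧
      (q - p₀) ^ 2 = 2 * t * (Real.sqrt (s q) + A) ^ 2) := by
    intro q
    constructor
    · intro hq
      have heq : q - p₀ = c * (Real.sqrt (s q) + A) := by
        simp only [hg] at hq; linarith
      have hqpos : p₀ < q := by
        have : 0 < c * (Real.sqrt (s q) + A) := by positivity
        linarith
      refine ⟨hqpos, ?_⟩
      rw [heq, mul_pow, hc2]
    · rintro ⟨hq1, hq2⟩
      have hX : 0 ≤ Real.sqrt (s q) + A := by positivity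
      have h1 : (q - p₀) ^ 2 = (c * (Real.sqrt (s q) + A)) ^ 2 := by
        rw [mul_pow, hc2]; exact hq2
      have h2 : q - p₀ = c * (Real.sqrt (s q) + A) := by
        have ha : 0 ≤ q - p₀ := by linarith
        have hb : 0 ≤ c * (Real.sqrt (s q) + A) := by positivity
        calc q - p₀ = Real.sqrt ((q - p₀) ^ 2) := (Real.sqrt_sq ha).symm
          _ = Real.sqrt ((c * (Real.sqrt (s q) + A)) ^ 2) := by rw [h1]
          _ = c * (Real.sqrt (s q) + A) := Real.sqrt_sq hb
      simp only [hg]; linarith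
  -- construct a large point where g ≥ 0
  set B : ℝ := p₀ + c * (σ ^ 2 + A) with hB
  have hBpos : 0 < B := by positivity
  set u : ℝ := (c * σ * Real.sqrt 2 + B) / (1 - c * Real.sqrt α₁) + 1 with hu
  have hnum : 0 ≤ c * σ * Real.sqrt 2 + B := by positivity
  have hu1 : 1 ≤ u := by
    rw [hu]; nlinarith [div_nonneg hnum hk.le]
  have hku : (1 - c * Real.sqrt α₁) * u = c * σ * Real.sqrt 2 + B + (1 - c * Real.sqrt α₁) := by
    rw [hu]; field_simp
  set M : ℝ := u ^ 2 with hM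
  have hu0 : (0:ℝ) ≤ u := le_trans zero_le_one hu1
  have huM : p₀ ≤ M := by
    have h1 : p₀ ≤ (1 - c * Real.sqrt α₁) * u := by
      rw [hku, hB]
      have h1a : 0 ≤ c * σ * Real.sqrt 2 := by positivity
      have h1b : 0 ≤ c * (σ ^ 2 + A) := by positivity
      linarith
    have h2 : (1 - c * Real.sqrt α₁) * u ≤ u := by
      have : 0 ≤ c * Real.sqrt α₁ * u := by positivity
      nlinarith
    have h3 : u ≤ u ^ 2 := by nlinarith [mul_nonneg hu0 (sub_nonneg.mpr hu1)]
    rw [hM]; linarith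
  have hsr2 : Real.sqrt 2 ^ 2 = 2 := Real.sq_sqrt (by norm_num)
  have hsr2n : 0 ≤ Real.sqrt 2 := Real.sqrt_nonneg _
  -- upper bound on sqrt (s M)
  have hupM : Real.sqrt (s M) ≤ Real.sqrt α₁ * u ^ 2 + Real.sqrt 2 * σ * u + σ ^ 2 := by
    have h1 : s M ≤ (Real.sqrt α₁ * u ^ 2 + Real.sqrt 2 * σ * u + σ ^ 2) ^ 2 := by
      have expand : (Real.sqrt α₁ * u ^ 2 + Real.sqrt 2 * σ * u + σ ^ 2) ^ 2
          = Real.sqrt α₁ ^ 2 * u ^ 4 + Real.sqrt 2 ^ 2 * σ ^ 2 * u ^ 2 + σ ^ 4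
            + 2 * Real.sqrt α₁ * Real.sqrt 2 * σ * u ^ 3
            + 2 * Real.sqrt α₁ * σ ^ 2 * u ^ 2 + 2 * Real.sqrt 2 * σ ^ 3 * u := by ring
      rw [hra2, hsr2] at expand
      rw [hs, hM, expand]
      nlinarith [mul_nonneg (mul_nonneg (mul_nonneg hra hsr2n) hσ.le) (pow_nonneg hu0 3),
        mul_nonneg (mul_nonneg hra (sq_nonneg σ)) (sq_nonneg u),
        mul_nonneg (mul_nonneg hsr2n (pow_nonneg hσ.le 3)) hu0]
    calc Real.sqrt (s M) ≤ Real.sqrt ((Real.sqrt α₁ * u ^ 2 + Real.sqrt 2 * σ * u + σ ^ 2) ^ 2) :=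
          Real.sqrt_le_sqrt h1
      _ = _ := Real.sqrt_sq (by positivity)
  have hgM : 0 ≤ g M := by
    simp only [hg]
    have : c * (Real.sqrt (s M) + A) ≤ c * (Real.sqrt α₁ * u ^ 2 + Real.sqrt 2 * σ * u + σ ^ 2 + A) := by
      apply mul_le_mul_of_nonneg_left (by linarith) hc0.le
    have hmain : c * (Real.sqrt α₁ * u ^ 2 + Real.sqrt 2 * σ * u + σ ^ 2 + A) + p₀ ≤ M := by
      rw [hM]
      have h3 : (1 - c * Real.sqrt α₁) * u ^ 2 = ((1 - c * Real.sqrt α₁) * u) * u := by ring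
      have h4 : (c * σ * Real.sqrt 2 + B + (1 - c * Real.sqrt α₁)) * u ≥
          c * σ * Real.sqrt 2 * u + B := by nlinarith
      nlinarith [hku]
    linarith
  have hgp₀ : g p₀ ≤ 0 := by
    simp only [hg, hA]
    nlinarith [Real.sqrt_nonneg (s p₀)]
  -- IVT
  obtain ⟨p, hpIcc, hpz⟩ := intermediate_value_Icc huM hgc.continuousOn ⟨hgp₀, hgM⟩
  have hpS := (key p).mp hpz
  refine ⟨⟨p, hpS⟩, ?_⟩
  -- least element
  set S : Set ℝ := {q : ℝ | p₀ < q ∧ (q - p₀) ^ 2 = 2 * t * (Real.sqrt (s q) + A) ^ 2} with hS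
  have hSeq : S = g ⁻¹' {0} := by
    ext q; simp only [hS, Set.mem_setOf_eq, Set.mem_preimage, Set.mem_singleton_iff]
    exact (key q).symm
  have hSclosed : IsClosed S := by rw [hSeq]; exact isClosed_singleton.preimage hgc
  have hSne : S.Nonempty := ⟨p, hpS⟩
  have hSbdd : BddBelow S := ⟨p₀, fun q hq => hq.1.le⟩
  set p₁ := sInf S with hp₁
  have hp₁S : p₁ ∈ S := hSclosed.csInf_mem hSne hSbdd
  refine ⟨p₁, ⟨hp₁S, fun q hq => csInf_le hSbdd hq⟩, ?_⟩
  -- the lower bound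
  have hp₁g : g p₁ = 0 := (key p₁).mpr hp₁S
  have heq : p₁ - p₀ = c * (Real.sqrt (s p₁) + A) := by
    simp only [hg] at hp₁g; linarith
  have hp₁0 : 0 ≤ p₁ := le_trans hp₀ hp₁S.1.le
  have hlb := hlow p₁ hp₁0
  rw [show Real.sqrt (2 * t * α₁) = c * Real.sqrt α₁ from Real.sqrt_mul h2t α₁,
    div_le_iff₀ hk]
  nlinarith [mul_le_mul_of_nonneg_left hlb hc0.le,
    mul_nonneg (mul_nonneg hc0.le hra) hp₀]
end

section
/- Fix σ > 0, α₁ ∈ (0,1]. Define s(p) = α₁p² + 2σ²p + σ⁴ and φ(p) = (p − p₀)²/(2(√s(p) + √s(p₀))²) for p > p₀ ≥ 0. Then φ is strictly increasing on (p₀, ∞) and lim_{p→∞} φ(p) = 1/(2α₁). Consequently, for t ≥ 1/(2α₁) there is no p > p₀ with φ(p) = t. -/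
open Real Set Filter

/-- Fix `σ > 0`, `α₁ ∈ (0,1]`, `p₀ ≥ 0`,
`s(p) = α₁ p² + 2σ² p + σ⁴`, and
`φ(p) = (p - p₀)² / (2 (√s(p) + √s(p₀))²)` for `p > p₀`.  Then `φ` is strictly
increasing on `(p₀, ∞)`, `φ(p) → 1/(2α₁)` as `p → ∞`, and consequently for
`t ≥ 1/(2α₁)` there is no `p > p₀` with `φ p = t`. -/
theorem stmt13
    (σ α₁ p₀ : ℝ) (hσ : 0 < σ) (hα₁ : 0 < α₁) (hα₁' : α₁ ≤ 1) (hp₀ : 0 ≤ p₀)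
    (s φ : ℝ → ℝ) (hs : ∀ p, s p = α₁ * p ^ 2 + 2 * σ ^ 2 * p + σ ^ 4)
    (hφ : ∀ p, φ p = (p - p₀) ^ 2
      / (2 * (Real.sqrt (s p) + Real.sqrt (s p₀)) ^ 2)) :
    StrictMonoOn φ (Set.Ioi p₀) ∧
    Tendsto φ atTop (nhds (1 / (2 * α₁))) ∧
    ∀ t : ℝ, 1 / (2 * α₁) ≤ t → ¬ ∃ p : ℝ, p₀ < p ∧ φ p = t := by
  have hC : 0 < s p₀ := by rw [hs]; positivity
  have hsqC : 0 < Real.sqrt (s p₀) := Real.sqrt_pos.mpr hC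
  have hspos : ∀ p, p₀ < p → 0 < s p := by
    intro p hp
    rw [hs]
    nlinarith [pow_pos hσ 4, mul_nonneg hα₁.le (sq_nonneg p),
      mul_nonneg (sq_nonneg σ) (le_trans hp₀ hp.le)]
  have hD : ∀ p, 0 < Real.sqrt (s p) + Real.sqrt (s p₀) := by
    intro p
    have := Real.sqrt_nonneg (s p)
    linarith
  -- part 1 : strict monotonicity
  have mono : StrictMonoOn φ (Set.Ioi p₀) := by
    intro x hx y hy hxy
    simp only [Set.mem_Ioi] at hx hy
    have hux : 0 < x - p₀ := sub_pos.mpr hx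
    have huy : 0 < y - p₀ := sub_pos.mpr hy
    have hDx := hD x
    have hDy := hD y
    have key : (x - p₀) * Real.sqrt (s y) ≤ (y - p₀) * Real.sqrt (s x) := by
      have h1 : (x - p₀) ^ 2 * s y ≤ (y - p₀) ^ 2 * s x := by
        rw [hs, hs]
        nlinarith [mul_nonneg (mul_nonneg (by positivity : (0:ℝ) ≤ 2*α₁*p₀+2*σ^2)
            (mul_pos hux huy).le) (sub_pos.mpr hxy).le,
          mul_nonneg (by positivity : (0:ℝ) ≤ σ^4+2*σ^2*p₀+α₁*p₀^2)
            (mul_nonneg (sub_pos.mpr hxy).le (by linarith : (0:ℝ) ≤ y + x - 2*p₀))]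
      have h2 := Real.sqrt_le_sqrt h1
      rwa [Real.sqrt_mul (sq_nonneg _), Real.sqrt_mul (sq_nonneg _),
        Real.sqrt_sq hux.le, Real.sqrt_sq huy.le] at h2
    have gxy : (x - p₀) / (Real.sqrt (s x) + Real.sqrt (s p₀))
        < (y - p₀) / (Real.sqrt (s y) + Real.sqrt (s p₀)) := by
      rw [div_lt_div_iff₀ hDx hDy]
      have h3 : (x - p₀) * Real.sqrt (s p₀) < (y - p₀) * Real.sqrt (s p₀) := by
        apply mul_lt_mul_of_pos_right _ hsqC
        linarith
      nlinarith [key, h3]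
    have ex : φ x = ((x - p₀) / (Real.sqrt (s x) + Real.sqrt (s p₀))) ^ 2 / 2 := by
      rw [hφ]; field_simp
    have ey : φ y = ((y - p₀) / (Real.sqrt (s y) + Real.sqrt (s p₀))) ^ 2 / 2 := by
      rw [hφ]; field_simp
    rw [ex, ey]
    have hg : 0 ≤ (x - p₀) / (Real.sqrt (s x) + Real.sqrt (s p₀)) := by positivity
    have := pow_lt_pow_left₀ gxy hg (n := 2) (by norm_num)
    linarith
  -- part 2 : the limit
  have lim : Tendsto φ atTop (nhds (1 / (2 * α₁))) := by
      set B : ℝ := 2 * α₁ * p₀ + 2 * σ ^ 2 with hB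
      set C : ℝ := s p₀ with hCdef
      set G : ℝ → ℝ := fun p =>
        1 / (2 * (Real.sqrt (α₁ + B * (p - p₀)⁻¹ + C * ((p - p₀)⁻¹) ^ 2)
          + Real.sqrt C * (p - p₀)⁻¹) ^ 2) with hG
      have t1 : Tendsto (fun p : ℝ => p - p₀) atTop atTop :=
        tendsto_atTop_add_const_right _ (-p₀) tendsto_id
      have tinv : Tendsto (fun p : ℝ => (p - p₀)⁻¹) atTop (nhds 0) :=
        t1.inv_tendsto_atTop
      have hinner : Tendsto (fun p : ℝ => α₁ + B * (p - p₀)⁻¹ + C * ((p - p₀)⁻¹) ^ 2)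
          atTop (nhds α₁) := by
        have : Tendsto (fun p : ℝ => α₁ + B * (p - p₀)⁻¹ + C * ((p - p₀)⁻¹) ^ 2)
            atTop (nhds (α₁ + B * 0 + C * 0 ^ 2)) :=
          (tendsto_const_nhds.add (tinv.const_mul B)).add ((tinv.pow 2).const_mul C)
        simpa using this
      have hsqrt : Tendsto (fun p : ℝ =>
          Real.sqrt (α₁ + B * (p - p₀)⁻¹ + C * ((p - p₀)⁻¹) ^ 2)) atTop
          (nhds (Real.sqrt α₁)) :=
        (Real.continuous_sqrt.tendsto α₁).comp hinner
      have hsum : Tendsto (fun p : ℝ =>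
          Real.sqrt (α₁ + B * (p - p₀)⁻¹ + C * ((p - p₀)⁻¹) ^ 2)
            + Real.sqrt C * (p - p₀)⁻¹) atTop (nhds (Real.sqrt α₁)) := by
        have := hsqrt.add (tinv.const_mul (Real.sqrt C))
        simpa using this
      have hGtend : Tendsto G atTop (nhds (1 / (2 * α₁))) := by
        have h2 : Tendsto (fun p : ℝ => 2 * (Real.sqrt (α₁ + B * (p - p₀)⁻¹
            + C * ((p - p₀)⁻¹) ^ 2) + Real.sqrt C * (p - p₀)⁻¹) ^ 2) atTop
            (nhds (2 * (Real.sqrt α₁) ^ 2)) := (hsum.pow 2).const_mul 2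
        have h3 := h2.inv₀ (by
          have : (Real.sqrt α₁) ^ 2 = α₁ := Real.sq_sqrt hα₁.le
          rw [this]; positivity)
        rw [Real.sq_sqrt hα₁.le] at h3
        simpa [hG, one_div] using h3
      have heq : φ =ᶠ[atTop] G := by
        filter_upwards [eventually_gt_atTop p₀] with p hp
        have hu : 0 < p - p₀ := sub_pos.mpr hp
        have hsp := hspos p hp
        have e1 : α₁ + B * (p - p₀)⁻¹ + C * ((p - p₀)⁻¹) ^ 2 = s p / (p - p₀) ^ 2 := by
          rw [hs, hCdef, hs, hB]
          field_simp
          ring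
        have e2 : Real.sqrt (s p / (p - p₀) ^ 2)
            = Real.sqrt (s p) / (p - p₀) := by
          rw [Real.sqrt_div hsp.le, Real.sqrt_sq hu.le]
        have hDp := hD p
        rw [hG, hφ]
        simp only []
        rw [e1, e2]
        rw [div_eq_div_iff (by positivity) (by
          have : Real.sqrt (s p) / (p - p₀) + Real.sqrt C * (p - p₀)⁻¹
              = (Real.sqrt (s p) + Real.sqrt C) / (p - p₀) := by
            field_simp
          rw [this]
          rw [hCdef]
          positivity)]
        rw [hCdef]
        field_simp
      exact hGtend.congr' heq.symm
  refine ⟨mono, lim, ?_⟩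
  -- part 3 : no solution above the limit
  intro t ht ⟨p, hp, hpt⟩
  have hle : φ (p + 1) ≤ 1 / (2 * α₁) := by
    apply ge_of_tendsto lim
    filter_upwards [eventually_gt_atTop (p + 1)] with q hq
    exact (mono (by simp [Set.mem_Ioi]; linarith) (by simp [Set.mem_Ioi]; linarith) hq).le
  have hlt : φ p < φ (p + 1) :=
    mono (by simpa using hp) (by simp [Set.mem_Ioi]; linarith) (by linarith)
  linarith [hpt ▸ hlt]
end
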